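/- Let n ≥ 2 be a natural number and A an arbitrary real n×n matrix. Then (det A)² ≤ ((1/n)·tr(A·Aᵀ))ⁿ. -/

import Mathlib

/-!
`A * Aᵀ` is positive semidefinite with determinant `(det A)²`, so its eigenvalues are nonnegative
reals whose product is `(det A)²` and whose sum is `tr (A * Aᵀ)`; the inequality is AM-GM for
these eigenvalues.
-/

open Finset Matrix

theorem Real.prod_le_sum_div_card_pow {ι : Type*} (s : Finset ι) (z : ι → ℝ)
    (hz : ∀ i ∈ s, 0 ≤ z i) : ∏ i ∈ s, z i ≤ ((∑ i ∈ s, z i) / #s) ^ #s := by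
  rcases s.eq_empty_or_nonempty with rfl | hs
  · simp
  have hmean := Real.geom_mean_le_arith_mean s (fun _ ↦ 1) z (fun _ _ ↦ zero_le_one)
    (by simpa using hs.card_pos) hz
  simp only [Real.rpow_one, one_mul, sum_const, nsmul_eq_mul, mul_one] at hmean
  calc ∏ i ∈ s, z i = ((∏ i ∈ s, z i) ^ ((#s : ℝ)⁻¹)) ^ #s :=
        (Real.rpow_inv_natCast_pow (prod_nonneg hz) hs.card_pos.ne').symm
    _ ≤ ((∑ i ∈ s, z i) / #s) ^ #s :=
        pow_le_pow_left₀ (Real.rpow_nonneg (prod_nonneg hz) _) hmean _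

theorem Matrix.PosSemidef.det_le_trace_div_card_pow {ι : Type*} [Fintype ι] [DecidableEq ι]
    {M : Matrix ι ι ℝ} (hM : M.PosSemidef) :
    M.det ≤ (M.trace / Fintype.card ι) ^ Fintype.card ι := by
  rw [hM.isHermitian.det_eq_prod_eigenvalues, hM.isHermitian.trace_eq_sum_eigenvalues]
  simpa using Real.prod_le_sum_div_card_pow univ _ fun i _ ↦ hM.eigenvalues_nonneg i

theorem det_sq_le_trace_pow_general (n : ℕ)
    (A : Matrix (Fin n) (Fin n) ℝ) :
    A.det ^ 2 ≤ ((1 / n) * (A * Aᵀ).trace) ^ n := by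
  have hdet : A.det ^ 2 = (A * Aᵀ).det := by rw [det_mul, det_transpose, sq]
  have hpsd : (A * Aᵀ).PosSemidef := by
    simpa using posSemidef_self_mul_conjTranspose A
  simpa [hdet, div_eq_inv_mul] using hpsd.det_le_trace_div_card_pow

theorem det_sq_le_trace_pow (n : ℕ) (hn : 2 ≤ n)
    (A : Matrix (Fin n) (Fin n) ℝ) :
    A.det ^ 2 ≤ ((1 / n) * (A * Aᵀ).trace) ^ n :=
  det_sq_le_trace_pow_general n A
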